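/- Fix n and let the positive integer m → ∞. Then for every fixed positive integer r, r·∫_0^∞ [1 − (1 − S_m(mξ)e^{−mξ})^n]·ξ^{r−1} dξ → 1 as m → ∞; equivalently, the r-th moment r·n^r·∫_0^∞ [1 − (1 − S_m(τ)e^{−τ})^n]·τ^{r−1} dτ of the maximum of n independent Erlang(m, 1/n) random variables is asymptotically equivalent to n^r·m^r as m → ∞. -/

import Mathlib

/-!
Let `X ∼ Erlang(m, 1)` and `q(ξ) = ξ e^{1-ξ}`, which is `< 1` for `ξ ≠ 1`. The exponential-moment
bounds `θ^m S_m(y) ≤ e^{θy}` for `θ ≤ 1` and `θ^m (e^y - S_m(y)) ≤ e^{θy}` for `θ ≥ 1`, taken at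
`θ = 1/ξ`, `y = mξ`, give the Chernoff bounds `P(X > mξ) ≤ q(ξ)^m` for `ξ ≥ 1` and
`P(X ≤ mξ) ≤ q(ξ)^m` for `ξ ≤ 1`. So `P(max Xᵢ > mξ)` tends to `1` on `(0, 1)` and to `0` on
`(1, ∞)`, and `P(max Xᵢ > mξ) ξ^{r-1}` is dominated by `n e (ξ^{r-1} + ξ^r) e^{-ξ}`; by dominated
convergence the integral tends to `∫_0^1 ξ^{r-1} dξ = 1/r`.
-/

open MeasureTheory Filter Real

/-- `S m y = ∑_{l=0}^{m-1} y^l / l!`, the `m`-th partial sum of the Taylor series of `e^y`. -/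
noncomputable def S (m : ℕ) (y : ℝ) : ℝ := ∑ l ∈ Finset.range m, y ^ l / (Nat.factorial l)

open Set Topology

lemma S_nonneg (m : ℕ) {y : ℝ} (hy : 0 ≤ y) : 0 ≤ S m y :=
  Finset.sum_nonneg fun l _ => by positivity

lemma S_mul_exp_neg_le_one (m : ℕ) {y : ℝ} (hy : 0 ≤ y) : S m y * exp (-y) ≤ 1 := by
  calc S m y * exp (-y) ≤ exp y * exp (-y) := by gcongr; exact sum_le_exp_of_nonneg hy m
    _ = 1 := by rw [← exp_add, add_neg_cancel, exp_zero]

@[fun_prop]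
lemma continuous_S (m : ℕ) : Continuous (S m) := by
  unfold S; fun_prop

lemma tendsto_S_atTop (y : ℝ) : Tendsto (fun N => S N y) atTop (𝓝 (exp y)) := by
  simpa [S, exp_eq_exp_ℝ] using (NormedSpace.expSeries_div_hasSum_exp (𝔸 := ℝ) y).tendsto_sum_nat

lemma pow_mul_S_le_exp (m : ℕ) {θ y : ℝ} (hθ₀ : 0 ≤ θ) (hθ₁ : θ ≤ 1) (hy : 0 ≤ y) :
    θ ^ m * S m y ≤ exp (θ * y) := by
  calc θ ^ m * S m y = ∑ l ∈ Finset.range m, θ ^ m * (y ^ l / l.factorial) := Finset.mul_sum ..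
    _ ≤ ∑ l ∈ Finset.range m, (θ * y) ^ l / l.factorial := by
        refine Finset.sum_le_sum fun l hl => ?_
        rw [mul_pow, mul_div_assoc]
        exact mul_le_mul_of_nonneg_right
          (pow_le_pow_of_le_one hθ₀ hθ₁ (Finset.mem_range.1 hl).le) (by positivity)
    _ ≤ exp (θ * y) := sum_le_exp_of_nonneg (by positivity) m

lemma pow_mul_exp_sub_S_le_exp (m : ℕ) {θ y : ℝ} (hθ : 1 ≤ θ) (hy : 0 ≤ y) :
    θ ^ m * (exp y - S m y) ≤ exp (θ * y) := by
  refine le_of_tendsto (((tendsto_S_atTop y).sub_const (S m y)).const_mul (θ ^ m))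
    (eventually_atTop.2 ⟨m, fun N hN => ?_⟩)
  calc θ ^ m * (S N y - S m y) = ∑ l ∈ Finset.Ico m N, θ ^ m * (y ^ l / l.factorial) := by
        rw [S, S, ← Finset.sum_Ico_eq_sub _ hN, Finset.mul_sum]
    _ ≤ ∑ l ∈ Finset.Ico m N, (θ * y) ^ l / l.factorial := by
        refine Finset.sum_le_sum fun l hl => ?_
        rw [mul_pow, mul_div_assoc]
        exact mul_le_mul_of_nonneg_right
          (pow_le_pow_right₀ hθ (Finset.mem_Ico.1 hl).1) (by positivity)
    _ ≤ S N (θ * y) :=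
        Finset.sum_le_sum_of_subset_of_nonneg
          (Finset.range_eq_Ico N ▸ Finset.Ico_subset_Ico_left (Nat.zero_le m))
          fun _ _ _ => by positivity
    _ ≤ exp (θ * y) := sum_le_exp_of_nonneg (by positivity) N

lemma mul_exp_one_sub_pow (m : ℕ) (ξ : ℝ) :
    (ξ * exp (1 - ξ)) ^ m = ξ ^ m * exp m * exp (-(m * ξ)) := by
  rw [mul_pow, ← exp_nat_mul, mul_assoc, ← exp_add]
  ring_nf

lemma mul_exp_one_sub_le_one (ξ : ℝ) : ξ * exp (1 - ξ) ≤ 1 := by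
  calc ξ * exp (1 - ξ) ≤ exp (ξ - 1) * exp (1 - ξ) := by
        gcongr; linarith [add_one_le_exp (ξ - 1)]
    _ = 1 := by rw [← exp_add, sub_add_sub_cancel', sub_self, exp_zero]

lemma mul_exp_one_sub_lt_one {ξ : ℝ} (hξ : ξ ≠ 1) : ξ * exp (1 - ξ) < 1 := by
  calc ξ * exp (1 - ξ) < exp (ξ - 1) * exp (1 - ξ) := by
        gcongr; linarith [add_one_lt_exp (sub_ne_zero.2 hξ)]
    _ = 1 := by rw [← exp_add, sub_add_sub_cancel', sub_self, exp_zero]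

/-- The tail `P(X > m ξ)` of `X ∼ Erlang(m, 1)`, i.e. `1 - F_m(m ξ)`. -/
noncomputable def erlangTail (m : ℕ) (ξ : ℝ) : ℝ := S m (m * ξ) * exp (-(m * ξ))

lemma erlangTail_nonneg (m : ℕ) {ξ : ℝ} (hξ : 0 ≤ ξ) : 0 ≤ erlangTail m ξ :=
  mul_nonneg (S_nonneg m (by positivity)) (exp_pos _).le

lemma erlangTail_le_one (m : ℕ) {ξ : ℝ} (hξ : 0 ≤ ξ) : erlangTail m ξ ≤ 1 :=
  S_mul_exp_neg_le_one m (by positivity)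

@[fun_prop]
lemma continuous_erlangTail (m : ℕ) : Continuous (erlangTail m) := by
  unfold erlangTail; fun_prop

lemma erlangTail_le (m : ℕ) {ξ : ℝ} (hξ : 1 ≤ ξ) : erlangTail m ξ ≤ (ξ * exp (1 - ξ)) ^ m := by
  have hξ₀ : 0 < ξ := by linarith
  have h := pow_mul_S_le_exp m (inv_nonneg.2 hξ₀.le) (inv_le_one_of_one_le₀ hξ)
    (mul_nonneg m.cast_nonneg hξ₀.le)
  rw [inv_mul_eq_div, mul_div_cancel_right₀ _ hξ₀.ne', inv_pow,
    inv_mul_le_iff₀ (pow_pos hξ₀ m)] at h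
  rw [erlangTail, mul_exp_one_sub_pow]
  gcongr

lemma one_sub_erlangTail_le (m : ℕ) {ξ : ℝ} (hξ₀ : 0 < ξ) (hξ₁ : ξ ≤ 1) :
    1 - erlangTail m ξ ≤ (ξ * exp (1 - ξ)) ^ m := by
  have h := pow_mul_exp_sub_S_le_exp m (one_le_inv₀ hξ₀ |>.2 hξ₁)
    (mul_nonneg m.cast_nonneg hξ₀.le)
  rw [inv_mul_eq_div, mul_div_cancel_right₀ _ hξ₀.ne', inv_pow,
    inv_mul_le_iff₀ (pow_pos hξ₀ m)] at h
  calc 1 - erlangTail m ξ = (exp (m * ξ) - S m (m * ξ)) * exp (-(m * ξ)) := by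
        rw [erlangTail, sub_mul, ← exp_add, add_neg_cancel, exp_zero]
    _ ≤ (ξ * exp (1 - ξ)) ^ m := by
        rw [mul_exp_one_sub_pow]
        gcongr

lemma tendsto_erlangTail_of_one_lt {ξ : ℝ} (hξ : 1 < ξ) :
    Tendsto (erlangTail · ξ) atTop (𝓝 0) :=
  squeeze_zero (fun m => erlangTail_nonneg m (by linarith)) (fun m => erlangTail_le m hξ.le)
    (tendsto_pow_atTop_nhds_zero_of_lt_one (by positivity) (mul_exp_one_sub_lt_one hξ.ne'))

lemma tendsto_erlangTail_of_lt_one {ξ : ℝ} (hξ₀ : 0 < ξ) (hξ₁ : ξ < 1) :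
    Tendsto (erlangTail · ξ) atTop (𝓝 1) := by
  have h : Tendsto (fun m => 1 - erlangTail m ξ) atTop (𝓝 0) :=
    squeeze_zero (fun m => sub_nonneg.2 (erlangTail_le_one m hξ₀.le))
      (fun m => one_sub_erlangTail_le m hξ₀ hξ₁.le)
      (tendsto_pow_atTop_nhds_zero_of_lt_one (by positivity) (mul_exp_one_sub_lt_one hξ₁.ne))
  simpa using (tendsto_const_nhds (x := (1 : ℝ))).sub h

lemma one_sub_one_sub_pow_le_mul (n : ℕ) {a : ℝ} (ha : a ≤ 2) : 1 - (1 - a) ^ n ≤ n * a := by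
  have h := one_add_mul_le_pow (a := -a) (by linarith) n
  rw [← sub_eq_add_neg, mul_neg, ← sub_eq_add_neg] at h
  linarith

/-- `P(max(X₁, …, Xₙ) > m ξ)` for independent `Xᵢ ∼ Erlang(m, 1)`. -/
noncomputable def erlangMaxTail (n m : ℕ) (ξ : ℝ) : ℝ := 1 - (1 - erlangTail m ξ) ^ n

lemma erlangMaxTail_nonneg (n m : ℕ) {ξ : ℝ} (hξ : 0 ≤ ξ) : 0 ≤ erlangMaxTail n m ξ :=
  sub_nonneg.2 <| pow_le_one₀ (sub_nonneg.2 (erlangTail_le_one m hξ))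
    (sub_le_self _ (erlangTail_nonneg m hξ))

lemma erlangMaxTail_le_one (n m : ℕ) {ξ : ℝ} (hξ : 0 ≤ ξ) : erlangMaxTail n m ξ ≤ 1 :=
  sub_le_self _ <| pow_nonneg (sub_nonneg.2 (erlangTail_le_one m hξ)) n

lemma erlangMaxTail_le_mul (n m : ℕ) {ξ : ℝ} (hξ : 0 ≤ ξ) :
    erlangMaxTail n m ξ ≤ n * erlangTail m ξ :=
  one_sub_one_sub_pow_le_mul n (by linarith [erlangTail_le_one m hξ])

@[fun_prop]
lemma continuous_erlangMaxTail (n m : ℕ) : Continuous (erlangMaxTail n m) := by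
  unfold erlangMaxTail; fun_prop

lemma tendsto_erlangMaxTail {n : ℕ} (hn : n ≠ 0) {ξ : ℝ} (hξ₀ : 0 < ξ) (hξ₁ : ξ ≠ 1) :
    Tendsto (erlangMaxTail n · ξ) atTop (𝓝 ((Iio 1).indicator 1 ξ)) := by
  rcases hξ₁.lt_or_gt with hlt | hgt
  · have h := (tendsto_const_nhds (x := (1 : ℝ))).sub
      (((tendsto_const_nhds (x := (1 : ℝ))).sub (tendsto_erlangTail_of_lt_one hξ₀ hlt)).pow n)
    simpa [erlangMaxTail, indicator_of_mem (mem_Iio.2 hlt), zero_pow hn] using h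
  · have h := (tendsto_const_nhds (x := (1 : ℝ))).sub
      (((tendsto_const_nhds (x := (1 : ℝ))).sub (tendsto_erlangTail_of_one_lt hgt)).pow n)
    simpa [erlangMaxTail, indicator_of_notMem (notMem_Iio.2 hgt.le)] using h

lemma erlangMaxTail_mul_pow_le {n : ℕ} (hn : n ≠ 0) (k : ℕ) {m : ℕ} (hm : m ≠ 0) {ξ : ℝ}
    (hξ : 0 < ξ) :
    erlangMaxTail n m ξ * ξ ^ k ≤ n * exp 1 * ((ξ ^ k + ξ ^ (k + 1)) * exp (-ξ)) := by
  have hn₁ : (1 : ℝ) ≤ n := by exact_mod_cast Nat.one_le_iff_ne_zero.2 hn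
  rcases le_total ξ 1 with hξ₁ | hξ₁
  · calc erlangMaxTail n m ξ * ξ ^ k ≤ 1 * (ξ ^ k * exp (1 - ξ)) :=
          mul_le_mul (erlangMaxTail_le_one n m hξ.le)
            (le_mul_of_one_le_right (by positivity) (one_le_exp (by linarith)))
            (by positivity) zero_le_one
      _ = 1 * exp 1 * (ξ ^ k * exp (-ξ)) := by rw [sub_eq_add_neg, exp_add]; ring
      _ ≤ n * exp 1 * ((ξ ^ k + ξ ^ (k + 1)) * exp (-ξ)) := by
          gcongr; exact le_add_of_nonneg_right (by positivity)
  · have hq : (ξ * exp (1 - ξ)) ^ m ≤ ξ * exp (1 - ξ) :=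
      pow_le_of_le_one (by positivity) (mul_exp_one_sub_le_one ξ) hm
    calc erlangMaxTail n m ξ * ξ ^ k ≤ n * (ξ * exp (1 - ξ)) * ξ ^ k := by
          gcongr
          exact (erlangMaxTail_le_mul n m hξ.le).trans
            (by gcongr; exact (erlangTail_le m hξ₁).trans hq)
      _ = n * exp 1 * (ξ ^ (k + 1) * exp (-ξ)) := by
          rw [sub_eq_add_neg, exp_add, pow_succ]; ring
      _ ≤ n * exp 1 * ((ξ ^ k + ξ ^ (k + 1)) * exp (-ξ)) := by
          gcongr; exact le_add_of_nonneg_left (by positivity)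

lemma integrableOn_pow_mul_exp_neg (k : ℕ) :
    IntegrableOn (fun x : ℝ => x ^ k * exp (-x)) (Ioi 0) := by
  simpa [mul_comm, rpow_natCast] using GammaIntegral_convergent (s := k + 1) (by positivity)

lemma setIntegral_Ioi_indicator_Iio_mul_pow (k : ℕ) :
    ∫ ξ in Ioi (0 : ℝ), (Iio 1).indicator 1 ξ * ξ ^ k = 1 / (k + 1) := by
  calc ∫ ξ in Ioi (0 : ℝ), (Iio 1).indicator 1 ξ * ξ ^ k
      = ∫ ξ in Ioi (0 : ℝ), (Iio 1).indicator (· ^ k) ξ := by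
        congr 1 with ξ
        by_cases h : ξ ∈ Iio 1 <;> simp [h]
    _ = ∫ ξ in (0 : ℝ)..1, ξ ^ k := by
        rw [setIntegral_indicator measurableSet_Iio, Ioi_inter_Iio,
          intervalIntegral.integral_of_le zero_le_one, integral_Ioc_eq_integral_Ioo]
    _ = 1 / (k + 1) := by simp [integral_pow]

lemma tendsto_integral_erlangMaxTail_mul_pow {n : ℕ} (hn : n ≠ 0) (k : ℕ) :
    Tendsto (fun m : ℕ => ∫ ξ in Ioi (0 : ℝ), erlangMaxTail n m ξ * ξ ^ k) atTop
      (𝓝 (1 / (k + 1))) := by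
  rw [← setIntegral_Ioi_indicator_Iio_mul_pow]
  refine tendsto_integral_filter_of_dominated_convergence
    (fun ξ => n * exp 1 * ((ξ ^ k + ξ ^ (k + 1)) * exp (-ξ)))
    (Eventually.of_forall fun m => (by fun_prop : Continuous _).aestronglyMeasurable) ?_ ?_ ?_
  · filter_upwards [eventually_ne_atTop 0] with m hm
    filter_upwards [ae_restrict_mem measurableSet_Ioi] with ξ hξ
    rw [norm_of_nonneg (mul_nonneg (erlangMaxTail_nonneg n m hξ.le) (pow_pos hξ k).le)]
    exact erlangMaxTail_mul_pow_le hn k hm hξ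
  · simpa only [add_mul, Pi.add_apply] using
      ((integrableOn_pow_mul_exp_neg k).add (integrableOn_pow_mul_exp_neg (k + 1))).const_mul _
  · filter_upwards [ae_restrict_mem measurableSet_Ioi,
      ae_restrict_of_ae ((countable_singleton 1).ae_notMem volume)] with ξ hξ₀ hξ₁
    exact (tendsto_erlangMaxTail hn hξ₀ hξ₁).mul_const _

/-- Fix `n` and let `m → ∞`: for every fixed positive integer `r`,
`r ∫_0^∞ [1 − (1 − S_m(mξ)e^{−mξ})^n] ξ^{r−1} dξ → 1`, i.e. the `r`-th moment of the maximum of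
`n` independent Erlang(m, 1/n) random variables is asymptotically `n^r m^r` as `m → ∞`. -/
theorem stmt1 (n : ℕ) (hn : 0 < n) (r : ℕ) (hr : 0 < r) :
    Tendsto (fun m : ℕ =>
        (r : ℝ) * ∫ ξ in Set.Ioi (0 : ℝ),
          (1 - (1 - S m ((m : ℝ) * ξ) * Real.exp (-((m : ℝ) * ξ))) ^ n) * ξ ^ (r - 1))
      atTop (nhds 1) := by
  have h := (tendsto_integral_erlangMaxTail_mul_pow hn.ne' (r - 1)).const_mul (r : ℝ)
  have hr' : ((r - 1 : ℕ) : ℝ) + 1 = r := by exact_mod_cast Nat.sub_add_cancel hr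
  rw [hr', mul_one_div_cancel (by positivity)] at h
  exact h
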